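/- Let C = conv({±q¹, …, ±qᵐ}) ⊆ ℝⁿ be a 0-symmetric polytope with nonempty interior, let K ⊆ ℝⁿ be a convex body that is complete and reduced with respect to C, and let c¹, …, cᵐ ∈ ℝⁿ be such that K = conv(⋃_{i=1}^{m} (cⁱ + (w(K,C)/2)•[−qⁱ, qⁱ])) and each segment cⁱ + (w(K,C)/2)•[−qⁱ, qⁱ] attains the width of K (i.e., for each i there is s ≠ 0 with b_s(cⁱ + (w(K,C)/2)•[−qⁱ, qⁱ], C) = b_s(K,C) = w(K,C)). If for some i ∈ {1,…,m} the point cⁱ + (w(K,C)/2)qⁱ is an extreme point of K and the point cⁱ − (w(K,C)/2)qⁱ belongs to the relative interior of a facet of K, then K is of constant width with respect to C. -/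

import Mathlib

open Pointwise

/-- Euclidean n-space. -/
abbrev Euc (n : ℕ) : Type := EuclideanSpace ℝ (Fin n)

/-- A convex body: a nonempty compact convex subset of ℝⁿ. -/
def IsBody {n : ℕ} (K : Set (Euc n)) : Prop := Convex ℝ K ∧ IsCompact K ∧ K.Nonempty

/-- Support function `h(K,u) = sup_{x ∈ K} ⟨u,x⟩`. -/
noncomputable def suppF {n : ℕ} (K : Set (Euc n)) (u : Euc n) : ℝ :=
  sSup ((fun x => (inner ℝ u x : ℝ)) '' K)

/-- The s-breadth `b_s(K,C) = 2 h(K-K,s) / h(C-C,s)` (here `K - K` is the pointwise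
(Minkowski) difference body). -/
noncomputable def breadthF {n : ℕ} (K C : Set (Euc n)) (s : Euc n) : ℝ :=
  2 * suppF (K - K) s / suppF (C - C) s

/-- The diameter `D(K,C) = sup_{s ≠ 0} b_s(K,C)`. -/
noncomputable def diamF {n : ℕ} (K C : Set (Euc n)) : ℝ :=
  sSup {d : ℝ | ∃ s : Euc n, s ≠ 0 ∧ d = breadthF K C s}

/-- The minimal width `w(K,C) = inf_{s ≠ 0} b_s(K,C)`. -/
noncomputable def widthF {n : ℕ} (K C : Set (Euc n)) : ℝ :=
  sInf {d : ℝ | ∃ s : Euc n, s ≠ 0 ∧ d = breadthF K C s}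

/-- The circumradius `R(K,C) = inf {λ ≥ 0 : ∃ c, K ⊆ c + λ•C}`. -/
noncomputable def circumF {n : ℕ} (K C : Set (Euc n)) : ℝ :=
  sInf {l : ℝ | 0 ≤ l ∧ ∃ c : Euc n, K ⊆ c +ᵥ l • C}

/-- The inradius `r(K,C) = sup {λ ≥ 0 : ∃ c, c + λ•C ⊆ K}`. -/
noncomputable def inradF {n : ℕ} (K C : Set (Euc n)) : ℝ :=
  sSup {l : ℝ | 0 ≤ l ∧ ∃ c : Euc n, c +ᵥ l • C ⊆ K}

/-- `K` is (diametrically) complete with respect to `C`. -/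
def CompleteWrt {n : ℕ} (K C : Set (Euc n)) : Prop :=
  ∀ K' : Set (Euc n), IsBody K' → K ⊂ K' → diamF K C < diamF K' C

/-- `K` is reduced with respect to `C`. -/
def ReducedWrt {n : ℕ} (K C : Set (Euc n)) : Prop :=
  ∀ K' : Set (Euc n), IsBody K' → K' ⊂ K → widthF K' C < widthF K C

/-- `K` is of constant width with respect to `C`. -/
def ConstWidthWrt {n : ℕ} (K C : Set (Euc n)) : Prop := widthF K C = diamF K C

/-- `C` is perfect: every complete body is of constant width. -/
def PerfectBody {n : ℕ} (C : Set (Euc n)) : Prop :=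
  ∀ K : Set (Euc n), IsBody K → CompleteWrt K C → ConstWidthWrt K C

/-- A polytope: the convex hull of finitely many points. -/
def IsPolytope {n : ℕ} (P : Set (Euc n)) : Prop :=
  ∃ V : Finset (Euc n), P = convexHull ℝ (V : Set (Euc n))

/-- An n-simplex: the convex hull of n+1 affinely independent points. -/
def IsSimplex {n : ℕ} (S : Set (Euc n)) : Prop :=
  ∃ p : Fin (n + 1) → Euc n, AffineIndependent ℝ p ∧ S = convexHull ℝ (Set.range p)

/-- The Minkowski asymmetry `s(K) = R(-K,K)`. -/
noncomputable def minkAsym {n : ℕ} (K : Set (Euc n)) : ℝ := circumF (-K) K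

/-- `K` is Minkowski-centered: `-K ⊆ s(K) • K`. -/
def MinkCentered {n : ℕ} (K : Set (Euc n)) : Prop := -K ⊆ minkAsym K • K

/-- Optimal containment `A ⊆^opt B`. -/
def SubsetOpt {n : ℕ} (A B : Set (Euc n)) : Prop :=
  A ⊆ B ∧ ∀ ρ : ℝ, ρ < 1 → ∀ c : Euc n, ¬ (A ⊆ c +ᵥ ρ • B)

/-- The face of `P` with outer normal `a`. -/
noncomputable def faceOf {n : ℕ} (P : Set (Euc n)) (a : Euc n) : Set (Euc n) :=
  {x ∈ P | (inner ℝ a x : ℝ) = suppF P a}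

/-- `F` is a facet (an (n-1)-dimensional face) of `P`. -/
def IsFacetOf {n : ℕ} (P F : Set (Euc n)) : Prop :=
  ∃ a : Euc n, a ≠ 0 ∧ F = faceOf P a ∧ Module.finrank ℝ (vectorSpan ℝ F) = n - 1

/-- `Kstar` is a completion of `K` with respect to `C`. -/
def IsCompletionOf {n : ℕ} (Kstar K C : Set (Euc n)) : Prop :=
  IsBody Kstar ∧ K ⊆ Kstar ∧ diamF Kstar C = diamF K C ∧ CompleteWrt Kstar C

/-! Write `x = cⁱ - (w/2)qⁱ` for the endpoint lying in the relative interior of the facet `F`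
with outer normal `a`; every outer normal of `K` at `x` is parallel to `a`. The segment
`[x, cⁱ + (w/2)qⁱ] ⊆ K` realises the width in some direction `s`, which forces `x` to maximise
`±s` over `K`; hence `b_a(K) = w`. Completeness says that adding any point `y ∉ K` strictly
increases the diameter, so in some unit direction `u` the breadth of `conv(K ∪ {y})`, attained
through `y`, exceeds `D(K)`. Letting `y = x + εa` tend to `x` produces an outer normal `u` of `K` at `x` with
`b_u(K) ≥ D(K)`, and since `u ∥ a` we get `D(K) ≤ b_a(K) = w`. -/

open Filter Topology Set

lemma IsCompact.exists_mem_of_tendsto {X Y : Type*} [TopologicalSpace X] [TopologicalSpace Y]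
    [FirstCountableTopology X] {S : Set X} (hS : IsCompact S) {P : Set (X × Y)} (hP : IsClosed P)
    {y : ℕ → Y} {x : Y} (hy : Tendsto y atTop (𝓝 x)) (h : ∀ k, ∃ u ∈ S, (u, y k) ∈ P) :
    ∃ u ∈ S, (u, x) ∈ P := by
  choose u huS huP using h
  obtain ⟨u₀, hu₀, φ, hφ, hlim⟩ := hS.tendsto_subseq huS
  exact ⟨u₀, hu₀, hP.mem_of_tendsto (hlim.prodMk_nhds (hy.comp hφ.tendsto_atTop))
    (Eventually.of_forall fun k => huP (φ k))⟩

section NormedSpace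

variable {E : Type*}

lemma IsCompact.sub [NormedAddCommGroup E] {A B : Set E} (hA : IsCompact A)
    (hB : IsCompact B) : IsCompact (A - B) := by
  rw [sub_eq_add_neg]
  exact hA.add hB.neg

lemma vadd_smul_segment_neg [AddCommGroup E] [Module ℝ E] (c q : E) (t : ℝ) :
    c +ᵥ t • segment ℝ (-q) q = segment ℝ (c - t • q) (c + t • q) := by
  have h : t • segment ℝ (-q) q = segment ℝ (-(t • q)) (t • q) := by
    rw [← image_smul]
    exact (image_segment ℝ (LinearMap.lsmul ℝ E t).toAffineMap (-q) q).trans (by simp)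
  rw [h, vadd_segment, vadd_eq_add, vadd_eq_add, sub_eq_add_neg]

lemma IsCompact.convexJoin_singleton [NormedAddCommGroup E] [NormedSpace ℝ E] {K : Set E}
    (hK : IsCompact K) (y : E) : IsCompact (convexJoin ℝ {y} K) := by
  have : convexJoin ℝ {y} K = (fun p : ℝ × E => y + p.1 • (p.2 - y)) '' (Icc 0 1 ×ˢ K) := by
    ext z
    simp only [convexJoin_singleton_left, segment_eq_image', mem_iUnion, mem_image, Prod.exists,
      mem_prod, exists_prop]
    aesop
  rw [this]
  exact (isCompact_Icc.prod hK).image (by fun_prop)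

lemma exists_add_smul_sub_mem_of_mem_intrinsicInterior [NormedAddCommGroup E] [NormedSpace ℝ E]
    {F : Set E} {x z : E} (hx : x ∈ intrinsicInterior ℝ F) (hz : z ∈ F) :
    ∃ δ : ℝ, 0 < δ ∧ x + δ • (x - z) ∈ F := by
  obtain ⟨y, hy, rfl⟩ := mem_intrinsicInterior.1 hx
  have hzA : z ∈ affineSpan ℝ F := subset_affineSpan ℝ F hz
  have hmem : ∀ t : ℝ, (y : E) + t • ((y : E) - z) ∈ affineSpan ℝ F := fun t => by
    simpa [vsub_eq_sub, vadd_eq_add, add_comm] using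
      AffineSubspace.smul_vsub_vadd_mem (affineSpan ℝ F) t y.2 hzA y.2
  let γ : ℝ → affineSpan ℝ F := fun t => ⟨y + t • (y - z), hmem t⟩
  have hγ : Continuous γ := by fun_prop
  have h0 : γ 0 = y := Subtype.ext (by simp [γ])
  have hev : ∀ᶠ t in 𝓝 (0 : ℝ), γ t ∈ ((↑) : affineSpan ℝ F → E) ⁻¹' F :=
    hγ.continuousAt.preimage_mem_nhds (h0 ▸ mem_interior_iff_mem_nhds.1 hy)
  obtain ⟨δ, hFδ, hδ⟩ :=
    ((hev.filter_mono nhdsWithin_le_nhds).and (self_mem_nhdsWithin (s := Ioi 0))).exists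
  exact ⟨δ, hδ, hFδ⟩

end NormedSpace

section InnerProductSpace

variable {E : Type*} [NormedAddCommGroup E] [InnerProductSpace ℝ E]

lemma IsMaxOn.inner_eq_of_mem_intrinsicInterior {F : Set E} {s x z : E}
    (hs : IsMaxOn (inner ℝ s) F x) (hx : x ∈ intrinsicInterior ℝ F) (hz : z ∈ F) :
    inner ℝ s z = inner ℝ s x := by
  obtain ⟨δ, hδ, hmem⟩ := exists_add_smul_sub_mem_of_mem_intrinsicInterior hx hz
  have hle := isMaxOn_iff.1 hs _ hmem
  rw [inner_add_right, real_inner_smul_right, inner_sub_right] at hle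
  exact le_antisymm (isMaxOn_iff.1 hs z hz) (le_of_mul_le_mul_left (by linarith) hδ)

lemma mem_orthogonal_vectorSpan_of_forall_inner_eq {F : Set E} {u : E} {c : ℝ}
    (h : ∀ z ∈ F, inner ℝ u z = c) : u ∈ (vectorSpan ℝ F)ᗮ := by
  rw [Submodule.mem_orthogonal', vectorSpan_def]
  intro v hv
  induction hv using Submodule.span_induction with
  | mem v hv =>
    obtain ⟨z, hz, z', hz', rfl⟩ := hv
    change inner ℝ u (z - z') = 0
    rw [inner_sub_right, h z hz, h z' hz', sub_self]
  | zero => exact inner_zero_right u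
  | add v v' _ _ h h' => rw [inner_add_right, h, h', add_zero]
  | smul t v _ h => rw [real_inner_smul_right, h, mul_zero]

end InnerProductSpace

section ConvexBody

variable {n : ℕ}

lemma bddAbove_image_inner {K : Set (Euc n)} (hK : IsCompact K) (u : Euc n) :
    BddAbove ((fun x => inner ℝ u x) '' K) :=
  hK.bddAbove_image (continuous_const.inner continuous_id).continuousOn

lemma le_suppF {K : Set (Euc n)} (hK : IsCompact K) {x : Euc n} (hx : x ∈ K) (u : Euc n) :
    inner ℝ u x ≤ suppF K u :=
  le_csSup (bddAbove_image_inner hK u) (mem_image_of_mem _ hx)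

lemma suppF_le {K : Set (Euc n)} (hK : K.Nonempty) {u : Euc n} {a : ℝ}
    (h : ∀ x ∈ K, inner ℝ u x ≤ a) : suppF K u ≤ a :=
  csSup_le (hK.image _) (forall_mem_image.2 h)

lemma exists_suppF_eq {K : Set (Euc n)} (hK : IsCompact K) (hK' : K.Nonempty) (u : Euc n) :
    ∃ x ∈ K, suppF K u = inner ℝ u x :=
  hK.exists_sSup_image_eq hK' (continuous_const.inner continuous_id).continuousOn

lemma suppF_singleton (y u : Euc n) : suppF {y} u = inner ℝ u y := by
  rw [suppF, image_singleton, csSup_singleton]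

lemma suppF_pair (a b u : Euc n) : suppF {a, b} u = max (inner ℝ u a) (inner ℝ u b) := by
  rw [suppF, image_pair, csSup_pair]

lemma suppF_union {A B : Set (Euc n)} (hA : IsCompact A) (hA' : A.Nonempty) (hB : IsCompact B)
    (hB' : B.Nonempty) (u : Euc n) : suppF (A ∪ B) u = max (suppF A u) (suppF B u) := by
  rw [suppF, image_union, csSup_union (bddAbove_image_inner hA u) (hA'.image _)
    (bddAbove_image_inner hB u) (hB'.image _)]
  rfl

lemma suppF_convexHull {S : Set (Euc n)} (hS : IsCompact S) (hS' : S.Nonempty) (u : Euc n) :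
    suppF (convexHull ℝ S) u = suppF S u := by
  have hsub : convexHull ℝ S ⊆ {x | inner ℝ u x ≤ suppF S u} :=
    convexHull_min (fun x hx => le_suppF hS hx u)
      (convex_halfSpace_le (innerₛₗ ℝ u).isLinear _)
  exact le_antisymm (suppF_le hS'.convexHull hsub)
    (csSup_le_csSup ⟨_, forall_mem_image.2 hsub⟩ (hS'.image _)
      (image_mono (subset_convexHull ℝ S)))

lemma suppF_sub {A B : Set (Euc n)} (hA : IsCompact A) (hA' : A.Nonempty) (hB : IsCompact B)
    (hB' : B.Nonempty) (s : Euc n) : suppF (A - B) s = suppF A s + suppF B (-s) := by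
  obtain ⟨a, ha, has⟩ := exists_suppF_eq hA hA' s
  obtain ⟨b, hb, hbs⟩ := exists_suppF_eq hB hB' (-s)
  refine le_antisymm (suppF_le (hA'.sub hB') ?_) ?_
  · rintro _ ⟨x, hx, y, hy, rfl⟩
    have := le_suppF hB hy (-s)
    rw [inner_sub_right, inner_neg_left] at *
    linarith [le_suppF hA hx s]
  · have := le_suppF (hA.sub hB) (sub_mem_sub ha hb) s
    rw [inner_sub_right] at this
    rw [has, hbs, inner_neg_left]
    linarith

lemma suppF_smul_of_nonneg (K : Set (Euc n)) {t : ℝ} (ht : 0 ≤ t) (s : Euc n) :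
    suppF K (t • s) = t * suppF K s := by
  have : (fun x => inner ℝ (t • s) x) '' K = t • ((fun x => inner ℝ s x) '' K) := by
    simp only [real_inner_smul_left, ← image_smul, image_image, smul_eq_mul]
  rw [suppF, this, Real.sSup_smul_of_nonneg ht, smul_eq_mul, suppF]

lemma suppF_neg_of_neg_eq {S : Set (Euc n)} (hS : -S = S) (s : Euc n) :
    suppF S (-s) = suppF S s := by
  conv_lhs => rw [suppF, ← hS, ← image_neg_eq_neg, image_image]
  simp only [inner_neg_neg]; rfl

lemma suppF_smul_of_neg_eq {S : Set (Euc n)} (hS : -S = S) (t : ℝ) (s : Euc n) :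
    suppF S (t • s) = |t| * suppF S s := by
  rcases le_total 0 t with ht | ht
  · rw [suppF_smul_of_nonneg S ht, abs_of_nonneg ht]
  · rw [← neg_smul_neg, suppF_smul_of_nonneg S (neg_nonneg.2 ht), suppF_neg_of_neg_eq hS,
      abs_of_nonpos ht]

lemma continuous_suppF {K : Set (Euc n)} (hK : IsCompact K) : Continuous (suppF K) :=
  hK.continuous_sSup (f := fun u x => inner ℝ u x) (continuous_fst.inner continuous_snd)

lemma inner_add_mul_norm_le_suppF {C : Set (Euc n)} (hC : IsCompact C) {x : Euc n} {r : ℝ}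
    (hr : 0 ≤ r) (hball : Metric.closedBall x r ⊆ C) (u : Euc n) :
    inner ℝ u x + r * ‖u‖ ≤ suppF C u := by
  have hmem : x + (r * ‖u‖⁻¹) • u ∈ C := hball <| by
    rw [Metric.mem_closedBall, dist_self_add_left, norm_smul, Real.norm_eq_abs,
      abs_of_nonneg (by positivity), mul_assoc]
    exact mul_le_of_le_one_right hr (inv_mul_le_one_of_le₀ le_rfl (norm_nonneg u))
  have hnorm : r * ‖u‖⁻¹ * ‖u‖ ^ 2 = r * ‖u‖ := by
    rcases eq_or_ne ‖u‖ 0 with h | h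
    · simp [h]
    · field_simp
  have := le_suppF hC hmem u
  rwa [inner_add_right, real_inner_smul_right, real_inner_self_eq_norm_sq, hnorm] at this

lemma suppF_le_mul_norm {K : Set (Euc n)} {R : ℝ} (hR : 0 ≤ R)
    (hK : K ⊆ Metric.closedBall 0 R) (u : Euc n) : suppF K u ≤ R * ‖u‖ :=
  Real.sSup_le (forall_mem_image.2 fun x hx => (real_inner_le_norm u x).trans <| by
    rw [mul_comm]
    exact mul_le_mul_of_nonneg_right (mem_closedBall_zero_iff.1 (hK hx)) (norm_nonneg u))
    (by positivity)

lemma exists_mul_norm_le_suppF_sub {C : Set (Euc n)} (hC : IsCompact C)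
    (hCint : (interior C).Nonempty) : ∃ r > 0, ∀ u : Euc n, r * ‖u‖ ≤ suppF (C - C) u := by
  obtain ⟨x, hx⟩ := hCint
  obtain ⟨r, hr, hball⟩ := Metric.nhds_basis_closedBall.mem_iff.1 (mem_interior_iff_mem_nhds.1 hx)
  have hC' : C.Nonempty := ⟨x, interior_subset hx⟩
  refine ⟨2 * r, by positivity, fun u => ?_⟩
  have h₁ := inner_add_mul_norm_le_suppF hC hr.le hball u
  have h₂ := inner_add_mul_norm_le_suppF hC hr.le hball (-u)
  rw [inner_neg_left, norm_neg] at h₂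
  rw [suppF_sub hC hC' hC hC']
  linarith

lemma suppF_sub_pos {C : Set (Euc n)} (hC : IsCompact C) (hCint : (interior C).Nonempty)
    {u : Euc n} (hu : u ≠ 0) : 0 < suppF (C - C) u := by
  obtain ⟨r, hr, hle⟩ := exists_mul_norm_le_suppF_sub hC hCint
  exact lt_of_lt_of_le (by positivity) (hle u)

lemma breadthF_eq {K : Set (Euc n)} (hK : IsCompact K) (hK' : K.Nonempty) (C : Set (Euc n))
    (s : Euc n) : breadthF K C s = 2 * (suppF K s + suppF K (-s)) / suppF (C - C) s := by
  rw [breadthF, suppF_sub hK hK' hK hK']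

lemma breadthF_smul (K C : Set (Euc n)) {t : ℝ} (ht : t ≠ 0) (s : Euc n) :
    breadthF K C (t • s) = breadthF K C s := by
  rw [breadthF, breadthF, suppF_smul_of_neg_eq (neg_sub K K), suppF_smul_of_neg_eq (neg_sub C C),
    mul_left_comm, mul_div_mul_left _ _ (abs_ne_zero.2 ht)]

lemma bddAbove_breadthF {K C : Set (Euc n)} (hK : IsCompact K) (hC : IsCompact C)
    (hCint : (interior C).Nonempty) :
    BddAbove {d : ℝ | ∃ s : Euc n, s ≠ 0 ∧ d = breadthF K C s} := by
  obtain ⟨r, hr, hCle⟩ := exists_mul_norm_le_suppF_sub hC hCint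
  obtain ⟨R, hR, hKR⟩ := (hK.sub hK).isBounded.subset_closedBall_lt 0 0
  refine ⟨2 * R / r, ?_⟩
  rintro _ ⟨s, hs, rfl⟩
  have hs' : 0 < ‖s‖ := norm_pos_iff.2 hs
  calc breadthF K C s ≤ 2 * (R * ‖s‖) / (r * ‖s‖) := by
        rw [breadthF]
        gcongr
        · exact suppF_le_mul_norm hR.le hKR s
        · exact hCle s
    _ = 2 * R / r := by rw [← mul_assoc, mul_div_mul_right _ _ hs'.ne']

lemma breadthF_le_diamF {K C : Set (Euc n)} (hK : IsCompact K) (hC : IsCompact C)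
    (hCint : (interior C).Nonempty) {s : Euc n} (hs : s ≠ 0) : breadthF K C s ≤ diamF K C :=
  le_csSup (bddAbove_breadthF hK hC hCint) ⟨s, hs, rfl⟩

lemma eq_smul_of_isMaxOn_of_mem_intrinsicInterior_faceOf {K : Set (Euc n)}
    {a s x : Euc n} (ha : a ≠ 0)
    (hdim : Module.finrank ℝ (vectorSpan ℝ (faceOf K a)) = n - 1)
    (hx : x ∈ intrinsicInterior ℝ (faceOf K a)) (hs : IsMaxOn (inner ℝ s) K x) :
    ∃ t : ℝ, s = t • a := by
  set V := vectorSpan ℝ (faceOf K a)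
  have hsV : s ∈ Vᗮ := mem_orthogonal_vectorSpan_of_forall_inner_eq fun z hz =>
    (hs.on_subset fun _ hz => hz.1).inner_eq_of_mem_intrinsicInterior hx hz
  have haV : a ∈ Vᗮ := mem_orthogonal_vectorSpan_of_forall_inner_eq fun z hz => hz.2
  have hVperp : Module.finrank ℝ Vᗮ = 1 := by
    have hsum := Submodule.finrank_add_finrank_orthogonal V
    have hpos := (Module.finrank_pos_iff_exists_ne_zero (R := ℝ)).2 ⟨a, ha⟩
    rw [hdim, finrank_euclideanSpace_fin] at hsum
    rw [finrank_euclideanSpace_fin] at hpos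
    omega
  obtain ⟨t, ht⟩ := (finrank_eq_one_iff_of_nonzero' (⟨a, haV⟩ : Vᗮ) (by simpa using ha)).1
    hVperp ⟨s, hsV⟩
  exact ⟨t, (congrArg Subtype.val ht).symm⟩

lemma breadthF_eq_of_isMaxOn_of_mem_intrinsicInterior_faceOf {K : Set (Euc n)}
    (C : Set (Euc n)) {a s x : Euc n} (ha : a ≠ 0)
    (hdim : Module.finrank ℝ (vectorSpan ℝ (faceOf K a)) = n - 1)
    (hx : x ∈ intrinsicInterior ℝ (faceOf K a)) (hs : s ≠ 0) (hmax : IsMaxOn (inner ℝ s) K x) :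
    breadthF K C s = breadthF K C a := by
  obtain ⟨t, rfl⟩ := eq_smul_of_isMaxOn_of_mem_intrinsicInterior_faceOf ha hdim hx hmax
  exact breadthF_smul K C (left_ne_zero_of_smul hs) a

lemma isMaxOn_or_of_suppF_sub_le_segment {K : Set (Euc n)} (hK : IsCompact K) {a b s : Euc n}
    (ha : a ∈ K) (hb : b ∈ K)
    (h : suppF (K - K) s ≤ suppF (segment ℝ a b - segment ℝ a b) s) :
    IsMaxOn (inner ℝ s) K a ∨ IsMaxOn (inner ℝ (-s)) K a := by
  have hab : IsCompact ({a, b} : Set (Euc n)) := (toFinite _).isCompact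
  have hab' : ({a, b} : Set (Euc n)).Nonempty := insert_nonempty a {b}
  have hseg : ∀ u, suppF (segment ℝ a b) u = max (inner ℝ u a) (inner ℝ u b) := fun u => by
    rw [← convexHull_pair, suppF_convexHull hab hab', suppF_pair]
  have hsegc : IsCompact (segment ℝ a b) := by
    rw [← convexHull_pair]; exact (toFinite _).isCompact_convexHull ℝ
  have hsegne : (segment ℝ a b).Nonempty := ⟨a, left_mem_segment ℝ a b⟩
  rw [suppF_sub hK ⟨a, ha⟩ hK ⟨a, ha⟩, suppF_sub hsegc hsegne hsegc hsegne, hseg, hseg,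
    inner_neg_left, inner_neg_left] at h
  have hKa := le_suppF hK ha (-s)
  have hKb := le_suppF hK hb s
  have hKb' := le_suppF hK hb (-s)
  rw [inner_neg_left] at hKa hKb'
  rcases le_total (inner ℝ s b) (inner ℝ s a) with hle | hle
  · rw [max_eq_left hle, max_eq_right (neg_le_neg hle)] at h
    exact .inl <| isMaxOn_iff.2 fun z hz => (le_suppF hK hz s).trans (by linarith)
  · rw [max_eq_right hle, max_eq_left (neg_le_neg hle)] at h
    refine .inr <| isMaxOn_iff.2 fun z hz => (le_suppF hK hz (-s)).trans ?_
    rw [inner_neg_left]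
    linarith

lemma faceOf_subset_closure_compl {K : Set (Euc n)} (hK : IsCompact K) {a : Euc n} (ha : a ≠ 0) :
    faceOf K a ⊆ closure Kᶜ := by
  rintro x ⟨-, hx⟩
  have hlim : Tendsto (fun t : ℝ => x + t • a) (𝓝[>] 0) (𝓝 x) :=
    (Continuous.tendsto' (f := fun t : ℝ => x + t • a) (by fun_prop) 0 x (by simp)).mono_left
      nhdsWithin_le_nhds
  refine mem_closure_of_tendsto hlim (eventually_nhdsWithin_of_forall fun t (ht : 0 < t) hmem => ?_)
  have := le_suppF hK hmem a
  rw [inner_add_right, hx, real_inner_smul_right, real_inner_self_eq_norm_sq] at this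
  have : 0 < t * ‖a‖ ^ 2 := by positivity
  linarith

lemma exists_norm_eq_one_lt_breadthF_of_diamF_lt {K K' C : Set (Euc n)}
    (h : diamF K C < diamF K' C) : ∃ s : Euc n, ‖s‖ = 1 ∧ diamF K C < breadthF K' C s := by
  have hne : {d : ℝ | ∃ s : Euc n, s ≠ 0 ∧ d = breadthF K' C s}.Nonempty := by
    -- otherwise both diameters are the junk value `sSup ∅ = 0`
    by_contra hemp
    have hall : ∀ s : Euc n, s = 0 := fun s => by_contra fun hs => hemp ⟨_, s, hs, rfl⟩
    simp [diamF, hall] at h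
  obtain ⟨_, ⟨s, hs, rfl⟩, hlt⟩ := exists_lt_of_lt_csSup hne h
  exact ⟨‖s‖⁻¹ • s, norm_smul_inv_norm hs,
    by rwa [breadthF_smul _ _ (inv_ne_zero (norm_ne_zero_iff.2 hs))]⟩

lemma CompleteWrt.exists_lt_of_notMem {K C : Set (Euc n)} (hcomp : CompleteWrt K C)
    (hK : IsBody K) (hC : IsCompact C) (hCint : (interior C).Nonempty) {y : Euc n} (hy : y ∉ K) :
    ∃ u : Euc n, ‖u‖ = 1 ∧
      diamF K C * suppF (C - C) u < 2 * (inner ℝ u y + suppF K (-u)) := by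
  obtain ⟨hKconv, hKc, hKne⟩ := hK
  have hK'c : IsCompact (convexHull ℝ (insert y K)) := by
    rw [convexHull_insert hKne, hKconv.convexHull_eq]
    exact hKc.convexJoin_singleton y
  set K' := convexHull ℝ (insert y K)
  have hK' : IsBody K' := ⟨convex_convexHull ℝ _, hK'c, (insert_nonempty y K).convexHull⟩
  have hKK' : K ⊂ K' := ⟨(subset_insert y K).trans (subset_convexHull ℝ _),
    fun h => hy (h (subset_convexHull ℝ _ (mem_insert y K)))⟩
  obtain ⟨s, hs1, hlt⟩ := exists_norm_eq_one_lt_breadthF_of_diamF_lt (hcomp K' hK' hKK')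
  have hs : s ≠ 0 := norm_ne_zero_iff.1 (hs1 ▸ one_ne_zero)
  have hsuppK' : ∀ u, suppF K' u = max (inner ℝ u y) (suppF K u) := fun u => by
    rw [suppF_convexHull (hKc.insert y) (insert_nonempty y K), insert_eq,
      suppF_union isCompact_singleton (singleton_nonempty y) hKc hKne, suppF_singleton]
  have hρ := suppF_sub_pos hC hCint hs
  have hbK := breadthF_le_diamF hKc hC hCint hs
  rw [breadthF_eq hKc hKne, div_le_iff₀ hρ] at hbK
  rw [breadthF_eq hK'.2.1 hK'.2.2, lt_div_iff₀ hρ, hsuppK', hsuppK', inner_neg_left] at hlt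
  obtain ⟨x, hx⟩ := hKne
  have hKs := le_suppF hKc hx s
  have hKs' := le_suppF hKc hx (-s)
  rw [inner_neg_left] at hKs'
  -- `y` can improve at most one of the support values `h(K, ±s)`, as `⟪s,y⟫ + ⟪-s,y⟫ = 0`.
  have key : diamF K C * suppF (C - C) s < 2 * (inner ℝ s y + suppF K (-s)) ∨
      diamF K C * suppF (C - C) s < 2 * (-inner ℝ s y + suppF K s) := by
    by_contra! hcon
    rcases max_choice (inner ℝ s y) (suppF K s) with h₁ | h₁ <;>
      rcases max_choice (-inner ℝ s y) (suppF K (-s)) with h₂ | h₂ <;>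
      rw [h₁, h₂] at hlt <;> linarith
  rcases key with h | h
  · exact ⟨s, hs1, h⟩
  · refine ⟨-s, by rwa [norm_neg], ?_⟩
    rwa [suppF_neg_of_neg_eq (neg_sub C C), inner_neg_left, neg_neg]

lemma CompleteWrt.exists_isMaxOn_diamF_le_breadthF {K C : Set (Euc n)} (hcomp : CompleteWrt K C)
    (hK : IsBody K) (hC : IsCompact C) (hCint : (interior C).Nonempty) {x : Euc n} (hxK : x ∈ K)
    (hx : x ∈ closure Kᶜ) :
    ∃ u : Euc n, u ≠ 0 ∧ IsMaxOn (inner ℝ u) K x ∧ diamF K C ≤ breadthF K C u := by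
  obtain ⟨y, hyK, hyx⟩ := mem_closure_iff_seq_limit.1 hx
  let P : Set (Euc n × Euc n) :=
    {p | diamF K C * suppF (C - C) p.1 ≤ 2 * (inner ℝ p.1 p.2 + suppF K (-p.1))}
  have hP : IsClosed P := isClosed_le
    (continuous_const.mul ((continuous_suppF (hC.sub hC)).comp continuous_fst))
    (continuous_const.mul ((continuous_fst.inner continuous_snd).add
      ((continuous_suppF hK.2.1).comp continuous_fst.neg)))
  obtain ⟨u, hu1, hu⟩ := (isCompact_sphere (0 : Euc n) 1).exists_mem_of_tendsto hP hyx fun k => by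
    obtain ⟨u, hu1, hu⟩ := hcomp.exists_lt_of_notMem hK hC hCint (hyK k)
    exact ⟨u, mem_sphere_zero_iff_norm.2 hu1, hu.le⟩
  have hu0 : u ≠ 0 := ne_zero_of_mem_unit_sphere ⟨u, hu1⟩
  have hρ := suppF_sub_pos hC hCint hu0
  have hbD := breadthF_le_diamF hK.2.1 hC hCint hu0
  rw [breadthF_eq hK.2.1 hK.2.2, div_le_iff₀ hρ] at hbD
  have hxu := le_suppF hK.2.1 hxK u
  have hux : diamF K C * suppF (C - C) u ≤ 2 * (inner ℝ u x + suppF K (-u)) := hu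
  have hmax : suppF K u ≤ inner ℝ u x := by linarith
  refine ⟨u, hu0, isMaxOn_iff.2 fun z hz => (le_suppF hK.2.1 hz u).trans hmax, ?_⟩
  rw [breadthF_eq hK.2.1 hK.2.2, le_div_iff₀ hρ]
  linarith

end ConvexBody

theorem segment_vertex_facet_constWidth_general {n m : ℕ} (q : Fin m → Euc n)
    (C : Set (Euc n)) (hC : C = convexHull ℝ (Set.range q ∪ -Set.range q))
    (hCint : (interior C).Nonempty)
    (K : Set (Euc n)) (hK : IsBody K)
    (hcomp : CompleteWrt K C)
    (c : Fin m → Euc n)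
    (hatt : ∀ i, ∃ s : Euc n, s ≠ 0 ∧
      breadthF (c i +ᵥ (widthF K C / 2) • segment ℝ (-(q i)) (q i)) C s
        = breadthF K C s ∧
      breadthF K C s = widthF K C)
    (i : Fin m)
    (hext : c i + (widthF K C / 2) • q i ∈ Set.extremePoints ℝ K)
    (hfacet : ∃ F : Set (Euc n), IsFacetOf K F ∧
      c i - (widthF K C / 2) • q i ∈ intrinsicInterior ℝ F) :
    ConstWidthWrt K C := by
  obtain ⟨F, ⟨a, ha, rfl, hdim⟩, hx⟩ := hfacet
  have hCc : IsCompact C :=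
    hC ▸ ((finite_range q).union (finite_range q).neg).isCompact_convexHull ℝ
  have hxK : c i - (widthF K C / 2) • q i ∈ K := (intrinsicInterior_subset hx).1
  have hwidth : breadthF K C a = widthF K C := by
    obtain ⟨s, hs, hseg, hsw⟩ := hatt i
    rw [vadd_smul_segment_neg] at hseg
    have hnum := (mul_right_inj' two_ne_zero).1 <|
      (div_left_inj' (suppF_sub_pos hCc hCint hs).ne').1 hseg
    rcases isMaxOn_or_of_suppF_sub_le_segment hK.2.1 hxK hext.1 hnum.ge with hmax | hmax
    · rw [← hsw, breadthF_eq_of_isMaxOn_of_mem_intrinsicInterior_faceOf C ha hdim hx hs hmax]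
    · rw [← hsw, ← breadthF_smul K C (neg_ne_zero.2 one_ne_zero) s, neg_one_smul,
        breadthF_eq_of_isMaxOn_of_mem_intrinsicInterior_faceOf C ha hdim hx (neg_ne_zero.2 hs) hmax]
  obtain ⟨u, hu, hmax, hDu⟩ := hcomp.exists_isMaxOn_diamF_le_breadthF hK hCc hCint hxK
    (faceOf_subset_closure_compl hK.2.1 ha (intrinsicInterior_subset hx))
  rw [breadthF_eq_of_isMaxOn_of_mem_intrinsicInterior_faceOf C ha hdim hx hu hmax, hwidth] at hDu
  exact le_antisymm (hwidth ▸ breadthF_le_diamF hK.2.1 hCc hCint ha) hDu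

/-- if for a complete and reduced body (with the segment representation of
reduced bodies) some width-attaining segment has one endpoint a vertex of `K` and the
other in the relative interior of a facet of `K`, then `K` is of constant width. -/
theorem segment_vertex_facet_constWidth {n m : ℕ} (q : Fin m → Euc n)
    (C : Set (Euc n)) (hC : C = convexHull ℝ (Set.range q ∪ -Set.range q))
    (hCint : (interior C).Nonempty)
    (K : Set (Euc n)) (hK : IsBody K)
    (hcomp : CompleteWrt K C) (hred : ReducedWrt K C)
    (c : Fin m → Euc n)
    (hrep : K = convexHull ℝ
      (⋃ i, (c i +ᵥ (widthF K C / 2) • segment ℝ (-(q i)) (q i))))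
    (hatt : ∀ i, ∃ s : Euc n, s ≠ 0 ∧
      breadthF (c i +ᵥ (widthF K C / 2) • segment ℝ (-(q i)) (q i)) C s
        = breadthF K C s ∧
      breadthF K C s = widthF K C)
    (i : Fin m)
    (hext : c i + (widthF K C / 2) • q i ∈ Set.extremePoints ℝ K)
    (hfacet : ∃ F : Set (Euc n), IsFacetOf K F ∧
      c i - (widthF K C / 2) • q i ∈ intrinsicInterior ℝ F) :
    ConstWidthWrt K C :=
  segment_vertex_facet_constWidth_general q C hC hCint K hK hcomp c hatt i hext hfacet
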